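/- Let {Z_n} be a controlled branching process with Z_0 = z_0 > 0 and control functions satisfying φ_n(0) = 0 almost surely. If P(ξ = 0) > 0, or P(φ(k) = 0) > 0 for every k = 1, 2, ..., then the extinction–explosion duality holds: P(Z_n → 0) + P(Z_n → ∞) = 1. -/

import Mathlib

open MeasureTheory ProbabilityTheory Filter Topology

/-- The mean of a probability distribution on `ℕ`. -/
noncomputable def natMean (ν : MeasureTheory.Measure ℕ) : ℝ := ∫ x, (x : ℝ) ∂ν

/-- A (one-type, discrete time) controlled branching process with random control functions,
offspring law `ν`, control laws `κ k` (the law of `φ(k)`), and initial population size `z0`: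
`Z (n+1) = ∑_{j < φ n (Z n)} ξ j n`, where the `ξ j n` are i.i.d. with law `ν`,
the control variables `φ n k` have law `κ k` (not depending on `n`), and the whole offspring
array is independent of the whole control array. -/
structure CBP (Ω : Type) [MeasurableSpace Ω] (μ : MeasureTheory.Measure Ω)
    (ν : MeasureTheory.Measure ℕ) (κ : ℕ → MeasureTheory.Measure ℕ) (z0 : ℕ) where
  Z : ℕ → Ω → ℕ
  ξ : ℕ → ℕ → Ω → ℕ
  φ : ℕ → ℕ → Ω → ℕ
  meas_ξ : ∀ j n, Measurable (ξ j n)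
  meas_φ : ∀ n k, Measurable (φ n k)
  law_ξ : ∀ j n, MeasureTheory.Measure.map (ξ j n) μ = ν
  law_φ : ∀ n k, MeasureTheory.Measure.map (φ n k) μ = κ k
  indep_ξ : ProbabilityTheory.iIndepFun
    (fun p : ℕ × ℕ => ξ p.1 p.2) μ
  indep_φ : ProbabilityTheory.iIndepFun
    (fun n => fun ω (k : ℕ) => φ n k ω) μ
  indep_ξφ : ProbabilityTheory.IndepFun
    (fun ω (p : ℕ × ℕ) => ξ p.1 p.2 ω) (fun ω (p : ℕ × ℕ) => φ p.1 p.2 ω) μ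
  pos_z0 : 0 < z0
  init : ∀ ω, Z 0 ω = z0
  step : ∀ n ω, Z (n + 1) ω = ∑ j ∈ Finset.range (φ n (Z n ω) ω), ξ j n ω

open scoped NNReal ENNReal

/-!
Zero is an absorbing state, since `φ n 0 = 0`. A population of size `j ≥ 1` is wiped out in the
next generation with probability at least `κ j {l} * ν {0} ^ l > 0` for a suitable `l`, whatever
happened before. By Lévy's conditional Borel–Cantelli lemma, a state `j ≥ 1` that is visited
infinitely often therefore forces a visit to `0`, i.e. extinction. A trajectory that does not
tend to infinity visits some state infinitely often, so it dies out.
-/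

section

variable {Ω : Type*} {m0 : MeasurableSpace Ω} {μ : Measure Ω}

theorem ProbabilityTheory.iIndep.sumElim {ι ι' : Type*} {m₁ : ι → MeasurableSpace Ω}
    {m₂ : ι' → MeasurableSpace Ω} (h₁ : iIndep m₁ μ) (h₂ : iIndep m₂ μ)
    (h : Indep (⨆ i, m₁ i) (⨆ i, m₂ i) μ) : iIndep (Sum.elim m₁ m₂) μ := by
  classical
  refine (iIndep_iff _ _).2 fun s f hf => ?_
  have hinter : ⋂ i ∈ s, f i =
      (⋂ a ∈ s.toLeft, f (.inl a)) ∩ ⋂ b ∈ s.toRight, f (.inr b) := by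
    ext ω
    simp only [Set.mem_iInter, Set.mem_inter_iff, Finset.mem_toLeft, Finset.mem_toRight]
    exact ⟨fun H => ⟨fun a ha => H _ ha, fun b hb => H _ hb⟩,
      fun H => by rintro (a | b) hi; exacts [H.1 a hi, H.2 b hi]⟩
  have hL : ∀ a ∈ s.toLeft, MeasurableSet[m₁ a] (f (.inl a)) :=
    fun a ha => hf _ (Finset.mem_toLeft.1 ha)
  have hR : ∀ b ∈ s.toRight, MeasurableSet[m₂ b] (f (.inr b)) :=
    fun b hb => hf _ (Finset.mem_toRight.1 hb)
  rw [hinter, (Indep_iff _ _ _).1 h _ _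
      (s.toLeft.measurableSet_biInter fun a ha => le_iSup m₁ a _ (hL a ha))
      (s.toRight.measurableSet_biInter fun b hb => le_iSup m₂ b _ (hR b hb)),
    h₁.meas_biInter hL, h₂.meas_biInter hR,
    ← Finset.prod_disjSum (f := fun i => μ (f i)), s.toLeft_disjSum_toRight]

theorem measurable_apply_of_countable {ι β : Type*} [MeasurableSpace ι] [Countable ι]
    [MeasurableSingletonClass ι] [MeasurableSpace β] {f : ι → Ω → β} (hf : ∀ i, Measurable (f i))
    {g : Ω → ι} (hg : Measurable g) : Measurable fun ω => f (g ω) ω :=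
  (measurable_from_prod_countable_left (f := fun p : Ω × ι => f p.2 p.1) hf).comp
    (measurable_id.prodMk hg)

theorem indicator_le_condExp_indicator [IsFiniteMeasure μ] {m : MeasurableSpace Ω} (hm : m ≤ m0)
    {D S : Set Ω} (hD : MeasurableSet[m] D) (hS : MeasurableSet[m0] S) {ε : ℝ≥0}
    (h : ∀ A, MeasurableSet[m] A → A ⊆ D → ε * μ A ≤ μ (A ∩ S)) :
    D.indicator (fun _ => (ε : ℝ)) ≤ᵐ[μ] μ[S.indicator 1 | m] := by
  have hint : Integrable (D.indicator fun _ => (ε : ℝ)) μ :=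
    (integrable_const _).indicator (hm D hD)
  refine ae_le_of_ae_le_trim (hm := hm) (ae_le_of_forall_setIntegral_le
    (hint.trim hm (stronglyMeasurable_const.indicator hD))
    (integrable_condExp.trim hm stronglyMeasurable_condExp) fun A hA _ => ?_)
  rw [← setIntegral_trim hm (stronglyMeasurable_const.indicator hD) hA,
    ← setIntegral_trim hm stronglyMeasurable_condExp hA,
    setIntegral_condExp hm (f := S.indicator 1) ((integrable_const (1 : ℝ)).indicator hS) hA,
    setIntegral_indicator (hm D hD), setIntegral_indicator hS, Pi.one_def, setIntegral_const,
    setIntegral_const, smul_eq_mul, smul_eq_mul, mul_one, mul_comm, measureReal_def,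
    measureReal_def, ← ENNReal.toReal_ofReal ε.coe_nonneg, ← ENNReal.toReal_mul]
  refine ENNReal.toReal_mono (measure_ne_top _ _) ?_
  calc ENNReal.ofReal ε * μ (A ∩ D) ≤ μ (A ∩ D ∩ S) := by
        simpa using h _ (hA.inter hD) Set.inter_subset_right
    _ ≤ μ (A ∩ S) := measure_mono (Set.inter_subset_inter_left _ Set.inter_subset_left)

/-- The hypothesis says that `P(B (n + 1) | ℱ n) ≥ ε` on `D n`. -/
theorem ae_frequently_of_measure_inter_ge [IsFiniteMeasure μ] {ℱ : Filtration ℕ m0}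
    {D B : ℕ → Set Ω} (hD : ∀ n, MeasurableSet[ℱ n] (D n)) (hB : ∀ n, MeasurableSet[ℱ n] (B n))
    {ε : ℝ≥0} (hε : 0 < ε)
    (h : ∀ n A, MeasurableSet[ℱ n] A → A ⊆ D n → ε * μ A ≤ μ (A ∩ B (n + 1))) :
    ∀ᵐ ω ∂μ, (∃ᶠ n in atTop, ω ∈ D n) → ∃ᶠ n in atTop, ω ∈ B n := by
  have hcond : ∀ᵐ ω ∂μ, ∀ n, (D n).indicator (fun _ => (ε : ℝ)) ω ≤
      μ[(B (n + 1)).indicator 1 | ℱ n] ω := ae_all_iff.2 fun n =>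
    indicator_le_condExp_indicator (ℱ.le n) (hD n) (ℱ.le _ _ (hB (n + 1))) (h n)
  filter_upwards [ae_mem_limsup_atTop_iff μ hB, hcond] with ω hlevy hω hfreq
  have hD_lim : ω ∈ limsup D atTop := Filter.mem_limsup_iff_frequently_mem.2 hfreq
  rw [Set.limsup_eq_tendsto_sum_indicator_atTop (NNReal.coe_pos.2 hε) D] at hD_lim
  exact Filter.mem_limsup_iff_frequently_mem.1 (hlevy.2
    (tendsto_atTop_mono (fun n => Finset.sum_le_sum fun k _ => hω k) hD_lim))

end

theorem Nat.exists_frequently_eq_of_not_tendsto_atTop {α : Type*} {l : Filter α} {u : α → ℕ}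
    (hu : ¬Tendsto u l atTop) : ∃ j, ∃ᶠ a in l, u a = j := by
  contrapose! hu
  refine tendsto_atTop.2 fun b => ?_
  filter_upwards [(Set.finite_Iio b).eventually_all.2 fun j _ => hu j] with a ha
  by_contra! hlt
  exact ha _ hlt rfl

namespace CBP

variable {Ω : Type} [MeasurableSpace Ω] {μ : Measure Ω} {ν : Measure ℕ} {κ : ℕ → Measure ℕ}
  {z0 : ℕ} (C : CBP Ω μ ν κ z0)

/-- `Sum.inl (j, n)` indexes the offspring variable `ξ j n`, `Sum.inr n` the control row
`φ n ·`. -/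
abbrev sigma : (ℕ × ℕ) ⊕ ℕ → MeasurableSpace Ω :=
  Sum.elim (fun p => MeasurableSpace.comap (C.ξ p.1 p.2) inferInstance)
    (fun n => MeasurableSpace.comap (fun ω k => C.φ n k ω) inferInstance)

def generation : (ℕ × ℕ) ⊕ ℕ → ℕ := Sum.elim Prod.snd id

lemma sigma_le (i : (ℕ × ℕ) ⊕ ℕ) : C.sigma i ≤ ‹MeasurableSpace Ω› := by
  rcases i with p | n
  · exact (C.meas_ξ p.1 p.2).comap_le
  · exact (measurable_pi_lambda _ fun k => C.meas_φ n k).comap_le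

lemma iIndep_sigma : iIndep C.sigma μ := by
  refine C.indep_ξ.iIndep.sumElim C.indep_φ.iIndep ?_
  refine indep_of_indep_of_le_right (indep_of_indep_of_le_left C.indep_ξφ ?_) ?_
  · exact iSup_le fun p => (measurable_iff_comap_le (f := C.ξ p.1 p.2)).1
      ((measurable_pi_apply p).comp (comap_measurable fun ω (q : ℕ × ℕ) => C.ξ q.1 q.2 ω))
  · exact iSup_le fun n => (measurable_iff_comap_le (f := fun ω k => C.φ n k ω)).1
      ((measurable_pi_lambda _ fun k => measurable_pi_apply (n, k)).comp
        (comap_measurable fun ω (q : ℕ × ℕ) => C.φ q.1 q.2 ω))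

/-- `past n` is generated by the variables of generations `0, …, n - 1`, which determine
`Z 0, …, Z n`. -/
def past : Filtration ℕ ‹MeasurableSpace Ω› where
  seq n := ⨆ i ∈ generation ⁻¹' Set.Iio n, C.sigma i
  mono' _ _ hmn := biSup_mono fun _ hi => lt_of_lt_of_le hi hmn
  le' _ := iSup₂_le fun i _ => C.sigma_le i

abbrev fresh (n : ℕ) : MeasurableSpace Ω := ⨆ i ∈ generation ⁻¹' {n}, C.sigma i

lemma indep_past_fresh (n : ℕ) : Indep (C.past n) (C.fresh n) μ :=
  indep_iSup_of_disjoint C.sigma_le C.iIndep_sigma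
    (Set.disjoint_left.2 fun _ hlt heq => (ne_of_lt hlt) heq)

lemma fresh_le_past_succ (n : ℕ) : C.fresh n ≤ C.past (n + 1) :=
  biSup_mono fun _ hi => Nat.lt_succ_of_le (le_of_eq hi)

lemma measurable_ξ_fresh (j n : ℕ) : Measurable[C.fresh n] (C.ξ j n) :=
  measurable_iff_comap_le.2 (le_biSup (s := generation ⁻¹' {n}) C.sigma (i := .inl (j, n)) rfl)

lemma measurable_φ_fresh (n k : ℕ) : Measurable[C.fresh n] (C.φ n k) :=
  (measurable_pi_apply k).comp
    (measurable_iff_comap_le.2 (le_biSup (s := generation ⁻¹' {n}) C.sigma (i := .inr n) rfl))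

def offspring (n j : ℕ) (ω : Ω) : ℕ := ∑ i ∈ Finset.range (C.φ n j ω), C.ξ i n ω

lemma measurable_offspring_fresh (n j : ℕ) : Measurable[C.fresh n] (C.offspring n j) :=
  measurable_apply_of_countable (f := fun l ω => ∑ i ∈ Finset.range l, C.ξ i n ω)
    (fun _ => Finset.measurable_sum _ fun i _ => C.measurable_ξ_fresh i n)
    (C.measurable_φ_fresh n j)

lemma measurable_Z_past (n : ℕ) : Measurable[C.past n] (C.Z n) := by
  induction n with
  | zero => simpa only [funext C.init] using measurable_const
  | succ n ih =>
    have hstep : C.Z (n + 1) = fun ω => C.offspring n (C.Z n ω) ω := funext (C.step n)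
    exact hstep ▸ measurable_apply_of_countable
      (fun j => (C.measurable_offspring_fresh n j).mono (C.fresh_le_past_succ n) le_rfl)
      (ih.mono (C.past.mono n.le_succ) le_rfl)

lemma measurable_Z (n : ℕ) : Measurable (C.Z n) :=
  (C.measurable_Z_past n).mono (C.past.le n) le_rfl

lemma measure_ξ_preimage (j n : ℕ) (s : Set ℕ) : μ (C.ξ j n ⁻¹' s) = ν s := by
  rw [← Measure.map_apply (C.meas_ξ j n) (Set.to_countable s).measurableSet, C.law_ξ j n]

lemma measure_φ_preimage (n k : ℕ) (s : Set ℕ) : μ (C.φ n k ⁻¹' s) = κ k s := by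
  rw [← Measure.map_apply (C.meas_φ n k) (Set.to_countable s).measurableSet, C.law_φ n k]

/-- The bound is the probability that `φ n j = l` and the first `l` offspring variables of
generation `n` vanish. -/
lemma le_measure_offspring_eq_zero (n j l : ℕ) :
    κ j {l} * ν {0} ^ l ≤ μ {ω | C.offspring n j ω = 0} := by
  classical
  let S : Finset ((ℕ × ℕ) ⊕ ℕ) := ((Finset.range l).image (·, n)).disjSum {n}
  let f : (ℕ × ℕ) ⊕ ℕ → Set Ω :=
    Sum.elim (fun p => C.ξ p.1 p.2 ⁻¹' {0}) (fun m => C.φ m j ⁻¹' {l})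
  have hf : ∀ i ∈ S, MeasurableSet[C.sigma i] (f i) := by
    rintro (p | m) -
    · exact ⟨{0}, measurableSet_singleton 0, rfl⟩
    · exact ⟨(fun g : ℕ → ℕ => g j) ⁻¹' {l}, measurable_pi_apply j (measurableSet_singleton l), rfl⟩
  have hsub : ⋂ i ∈ S, f i ⊆ {ω | C.offspring n j ω = 0} := by
    intro ω hω
    simp only [Set.mem_iInter] at hω
    have hφ : C.φ n j ω = l := hω (.inr n) (by simp [S])
    refine Finset.sum_eq_zero fun i hi => hω (.inl (i, n)) ?_
    simpa [S, hφ] using hi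
  calc κ j {l} * ν {0} ^ l = ∏ i ∈ S, μ (f i) := by
        rw [Finset.prod_disjSum, Finset.prod_image (by simp), Finset.prod_singleton, mul_comm]
        simp [f, measure_ξ_preimage, measure_φ_preimage]
    _ = μ (⋂ i ∈ S, f i) := (C.iIndep_sigma.meas_biInter hf).symm
    _ ≤ _ := measure_mono hsub

lemma exists_pos_le_measure_offspring_eq_zero [IsProbabilityMeasure μ]
    (h : 0 < ν {0} ∨ ∀ k : ℕ, 1 ≤ k → 0 < κ k {0}) {j : ℕ} (hj : 1 ≤ j) :
    ∃ ε : ℝ≥0, 0 < ε ∧ ∀ n, (ε : ℝ≥0∞) ≤ μ {ω | C.offspring n j ω = 0} := by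
  obtain ⟨l, hl⟩ : ∃ l, 0 < κ j {l} * ν {0} ^ l := by
    rcases h with hν | hκ
    · have : IsProbabilityMeasure (κ j) :=
        C.law_φ 0 j ▸ Measure.isProbabilityMeasure_map (C.meas_φ 0 j).aemeasurable
      obtain ⟨l, hl⟩ : ∃ l, κ j {l} ≠ 0 := by
        by_contra! hall
        have huniv : κ j Set.univ = 0 := by
          rw [← Set.iUnion_of_singleton]
          exact measure_iUnion_null_iff.2 hall
        simp at huniv
      exact ⟨l, ENNReal.mul_pos hl (pow_ne_zero l hν.ne')⟩
    · exact ⟨0, by simpa using hκ j hj⟩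
  have hfin : κ j {l} * ν {0} ^ l ≠ ∞ :=
    ne_top_of_le_ne_top (measure_ne_top μ _) (C.le_measure_offspring_eq_zero 0 j l)
  refine ⟨(κ j {l} * ν {0} ^ l).toNNReal, ENNReal.toNNReal_pos hl.ne' hfin, fun n => ?_⟩
  rw [ENNReal.coe_toNNReal hfin]
  exact C.le_measure_offspring_eq_zero n j l

lemma measure_inter_Z_succ_eq_zero {n j : ℕ} {A : Set Ω} (hA : MeasurableSet[C.past n] A)
    (hAj : A ⊆ {ω | C.Z n ω = j}) :
    μ (A ∩ {ω | C.Z (n + 1) ω = 0}) = μ A * μ {ω | C.offspring n j ω = 0} := by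
  have hset : A ∩ {ω | C.Z (n + 1) ω = 0} = A ∩ {ω | C.offspring n j ω = 0} :=
    Set.ext fun ω => and_congr_right fun hω => by
      change C.Z (n + 1) ω = 0 ↔ C.offspring n j ω = 0
      rw [C.step n ω, (hAj hω : C.Z n ω = j)]
      rfl
  rw [hset]
  exact (Indep_iff _ _ _).1 (C.indep_past_fresh n) _ _ hA
    (C.measurable_offspring_fresh n j (measurableSet_singleton 0))

lemma ae_frequently_eq_zero_of_frequently_eq [IsProbabilityMeasure μ]
    (h : 0 < ν {0} ∨ ∀ k : ℕ, 1 ≤ k → 0 < κ k {0}) (j : ℕ) :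
    ∀ᵐ ω ∂μ, (∃ᶠ n in atTop, C.Z n ω = j) → ∃ᶠ n in atTop, C.Z n ω = 0 := by
  rcases Nat.eq_zero_or_pos j with rfl | hj
  · exact ae_of_all _ fun _ => id
  obtain ⟨ε, hε, hle⟩ := C.exists_pos_le_measure_offspring_eq_zero h hj
  refine ae_frequently_of_measure_inter_ge (ℱ := C.past) (D := fun n => {ω | C.Z n ω = j})
    (B := fun n => {ω | C.Z n ω = 0}) (fun n => C.measurable_Z_past n (measurableSet_singleton j))
    (fun n => C.measurable_Z_past n (measurableSet_singleton 0)) hε fun n A hA hAj => ?_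
  rw [C.measure_inter_Z_succ_eq_zero hA hAj, mul_comm]
  gcongr
  exact hle n

lemma Z_eq_zero_of_le {ω : Ω} (hφ : ∀ n, C.φ n 0 ω = 0) {n m : ℕ} (hn : C.Z n ω = 0)
    (hnm : n ≤ m) : C.Z m ω = 0 := by
  induction m, hnm using Nat.le_induction with
  | base => exact hn
  | succ m _ ih => simp [C.step m ω, ih, hφ m]

lemma ae_tendsto_zero_or_atTop [IsProbabilityMeasure μ] (hφ0 : ∀ n, ∀ᵐ ω ∂μ, C.φ n 0 ω = 0)
    (h : 0 < ν {0} ∨ ∀ k : ℕ, 1 ≤ k → 0 < κ k {0}) :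
    ∀ᵐ ω ∂μ, Tendsto (C.Z · ω) atTop (𝓝 0) ∨ Tendsto (C.Z · ω) atTop atTop := by
  filter_upwards [ae_all_iff.2 hφ0, ae_all_iff.2 (C.ae_frequently_eq_zero_of_frequently_eq h)]
    with ω hφ hZ
  refine or_iff_not_imp_right.2 fun hnot => ?_
  obtain ⟨j, hj⟩ := Nat.exists_frequently_eq_of_not_tendsto_atTop hnot
  obtain ⟨n, hn⟩ := (hZ j hj).exists
  exact tendsto_nhds_of_eventually_eq
    (eventually_atTop.2 ⟨n, fun m hm => C.Z_eq_zero_of_le hφ hn hm⟩)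

end CBP

/-- If the control functions vanish at `0` a.s. and either `P(ξ = 0) > 0` or
`P(φ(k) = 0) > 0` for every `k ≥ 1`, then the extinction–explosion duality
`P(Z_n → 0) + P(Z_n → ∞) = 1` holds. -/
theorem cbp_extinction_explosion_duality
    {Ω : Type} [MeasurableSpace Ω] (μ : MeasureTheory.Measure Ω) [IsProbabilityMeasure μ]
    (ν : MeasureTheory.Measure ℕ) (κ : ℕ → MeasureTheory.Measure ℕ) (z0 : ℕ)
    (C : CBP Ω μ ν κ z0)
    (hφ0 : ∀ n, ∀ᵐ ω ∂μ, C.φ n 0 ω = 0)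
    (h : 0 < ν {0} ∨ ∀ k : ℕ, 1 ≤ k → 0 < κ k {0}) :
    μ {ω | Tendsto (fun n => C.Z n ω) atTop (𝓝 0)}
      + μ {ω | Tendsto (fun n => C.Z n ω) atTop atTop} = 1 := by
  have hE := measurableSet_tendsto (l := atTop) (𝓝 (0 : ℕ)) C.measurable_Z
  have hB := measurableSet_tendsto (l := atTop) (atTop : Filter ℕ) C.measurable_Z
  have hdisj : Disjoint {ω | Tendsto (fun n => C.Z n ω) atTop (𝓝 0)}
      {ω | Tendsto (fun n => C.Z n ω) atTop atTop} :=
    Set.disjoint_left.2 fun _ hzero htop => hzero.not_tendsto (disjoint_nhds_atTop 0) htop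
  rw [← measure_union hdisj hB, ← prob_compl_eq_zero_iff (hE.union hB)]
  exact ae_iff.1 (C.ae_tendsto_zero_or_atTop hφ0 h)
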